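/- arXiv:1205.5625 — 2 statements merged into one kernel-verified Lean document; each statement's English description precedes it below -/
import Mathlib

section
/- Let (T, ≤) be a rooted non-metric tree with increasing parametrization Ψ: T → [1,∞] and associated metric d_Ψ. Then every set of the form [σ]_τ (a tangent vector class) is open in the metric topology of d_Ψ; consequently the weak tree topology is coarser than or equal to the topology of d_Ψ. -/
/-!
In a tree whose down-sets are chains, two points `γ, α` lie in different tangent directions at
`τ` (or `α = τ`) only if `τ` lies on the segment `[γ, α]`; `d_Ψ` is additive along segments, so
then `d_Ψ(γ, α) ≥ d_Ψ(γ, τ)`. Hence the `d_Ψ`-ball of radius `d_Ψ(γ, τ) > 0` around any point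
`γ` of `[σ]_τ` stays inside `[σ]_τ`.
-/

variable {T : Type*} [PartialOrder T]

/-- The closed segment `[a,b] = {γ | a∧b ≤ γ ≤ a or a∧b ≤ γ ≤ b}`, where
`wedge a b` is the infimum `a∧b`. -/
def seg (wedge : T → T → T) (a b : T) : Set T :=
  {γ | (wedge a b ≤ γ ∧ γ ≤ a) ∨ (wedge a b ≤ γ ∧ γ ≤ b)}

/-- The half-open segment `]a,b] = [a,b] \ {a}`. -/
def segOC (wedge : T → T → T) (a b : T) : Set T :=
  seg wedge a b \ {a}

/-- The tangent relation at `τ`: `a ~_τ b ↔ ]τ,a] ∩ ]τ,b] ≠ ∅`. -/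
def tangRel (wedge : T → T → T) (τ a b : T) : Prop :=
  (segOC wedge τ a ∩ segOC wedge τ b).Nonempty

/-- The tangent-vector class `[σ]_τ` of `σ` at `τ`, a subset of `T \ {τ}`. -/
def tangClass (wedge : T → T → T) (τ σ : T) : Set T :=
  {α | α ≠ τ ∧ tangRel wedge τ σ α}

open ENNReal in
/-- The distance associated to a parametrization `Ψ : T → [1,∞]`:
`d_Ψ(a,b) = (1/Ψ(a∧b) − 1/Ψ(a)) + (1/Ψ(a∧b) − 1/Ψ(b))`. -/
noncomputable def dPsi (wedge : T → T → T) (Ψ : T → ℝ≥0∞) (a b : T) : ℝ :=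
  ((Ψ (wedge a b))⁻¹.toReal - (Ψ a)⁻¹.toReal) +
    ((Ψ (wedge a b))⁻¹.toReal - (Ψ b)⁻¹.toReal)

/-- The weak tree topology, generated by the tangent-vector classes. -/
def weakTreeTopology (wedge : T → T → T) : TopologicalSpace T :=
  TopologicalSpace.generateFrom {U | ∃ τ σ : T, σ ≠ τ ∧ U = tangClass wedge τ σ}

/-- The topology associated with the metric `d_Ψ`, generated by open balls. -/
noncomputable def dPsiTopology (wedge : T → T → T) (Ψ : T → ENNReal) :
    TopologicalSpace T :=
  TopologicalSpace.generateFrom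
    {B | ∃ (x : T) (ε : ℝ), 0 < ε ∧ B = {y | dPsi wedge Ψ x y < ε}}

open ENNReal Topology

theorem isChain_Iic_of_orderIso {X α : Type*} [PartialOrder X] [LinearOrder α] {τ : X}
    (e : {σ : X // σ ≤ τ} ≃o α) : IsChain (· ≤ ·) (Set.Iic τ) :=
  fun x hx y hy _ => (le_total (e ⟨x, hx⟩) (e ⟨y, hy⟩)).imp e.le_iff_le.1 e.le_iff_le.1

theorem strictAnti_toReal_inv {X : Type*} [Preorder X] {Ψ : X → ℝ≥0∞} (hΨ0 : ∀ t, Ψ t ≠ 0)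
    (hΨ : StrictMono Ψ) : StrictAnti fun t => (Ψ t)⁻¹.toReal :=
  fun a _ hab => ENNReal.toReal_strict_mono (ENNReal.inv_ne_top.2 (hΨ0 a))
    (ENNReal.inv_lt_inv.2 (hΨ hab))

section Tree

variable {X : Type*} [SemilatticeInf X] {a b x τ σ γ α : X}

theorem mem_seg_inf : x ∈ seg (· ⊓ ·) a b ↔ a ⊓ b ≤ x ∧ (x ≤ a ∨ x ≤ b) :=
  and_or_left.symm

theorem mem_segOC_of_le_of_lt (h₁ : τ ⊓ a ≤ x) (h₂ : x < τ) : x ∈ segOC (· ⊓ ·) τ a :=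
  ⟨Or.inl ⟨h₁, h₂.le⟩, h₂.ne⟩

theorem mem_segOC_of_lt_of_le (h₁ : τ < x) (h₂ : x ≤ a) : x ∈ segOC (· ⊓ ·) τ a :=
  ⟨Or.inr ⟨inf_le_left.trans h₁.le, h₂⟩, h₁.ne'⟩

/-- At `τ` there is a single downward direction; upward, `a` and `b` share a direction iff
they branch off strictly above `τ`. -/
theorem tangRel_inf_iff (hchain : ∀ z : X, IsChain (· ≤ ·) (Set.Iic z)) :
    tangRel (· ⊓ ·) τ a b ↔ (τ ⊓ a < τ ∧ τ ⊓ b < τ) ∨ τ < a ⊓ b := by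
  constructor
  · rintro ⟨x, ⟨hxa, hxτ : x ≠ τ⟩, hxb, -⟩
    rw [mem_seg_inf] at hxa hxb
    by_cases hxτ' : x ≤ τ
    · have hlt := hxτ'.lt_of_ne hxτ
      exact Or.inl ⟨hxa.1.trans_lt hlt, hxb.1.trans_lt hlt⟩
    have hx : x ≤ a ⊓ b := le_inf (hxa.2.resolve_left hxτ') (hxb.2.resolve_left hxτ')
    by_cases hτx : τ ≤ x
    · exact Or.inr ((hτx.lt_of_ne hxτ.symm).trans_le hx)
    · exact Or.inl ⟨inf_lt_left.2 fun h => hτx (le_inf le_rfl h |>.trans hxa.1),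
        inf_lt_left.2 fun h => hτx (le_inf le_rfl h |>.trans hxb.1)⟩
  · rintro (⟨ha, hb⟩ | h)
    · rcases (hchain τ).total (inf_le_left : τ ⊓ a ≤ τ) (inf_le_left : τ ⊓ b ≤ τ) with h | h
      · exact ⟨τ ⊓ b, mem_segOC_of_le_of_lt h hb, mem_segOC_of_le_of_lt le_rfl hb⟩
      · exact ⟨τ ⊓ a, mem_segOC_of_le_of_lt le_rfl ha, mem_segOC_of_le_of_lt h ha⟩
    · exact ⟨a ⊓ b, mem_segOC_of_lt_of_le h inf_le_left, mem_segOC_of_lt_of_le h inf_le_right⟩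

theorem lt_inf_of_lt_inf_of_lt_inf (hchain : ∀ z : X, IsChain (· ≤ ·) (Set.Iic z))
    (h₁ : τ < σ ⊓ γ) (h₂ : τ < γ ⊓ α) : τ < σ ⊓ α := by
  rcases (hchain γ).total (inf_le_right : σ ⊓ γ ≤ γ) (inf_le_left : γ ⊓ α ≤ γ) with h | h
  · exact h₁.trans_le (le_inf inf_le_left (h.trans inf_le_right))
  · exact h₂.trans_le (le_inf (h.trans inf_le_left) inf_le_right)

theorem mem_seg_of_mem_tangClass_of_notMem (hchain : ∀ z : X, IsChain (· ≤ ·) (Set.Iic z))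
    (hγ : γ ∈ tangClass (· ⊓ ·) τ σ) (hα : α ∉ tangClass (· ⊓ ·) τ σ) :
    τ ∈ seg (· ⊓ ·) γ α := by
  rw [mem_seg_inf]
  by_cases hατ : α = τ
  · exact hατ ▸ ⟨inf_le_right, Or.inr le_rfl⟩
  have hσα : ¬((τ ⊓ σ < τ ∧ τ ⊓ α < τ) ∨ τ < σ ⊓ α) :=
    (tangRel_inf_iff hchain).not.1 fun h => hα ⟨hατ, h⟩
  rcases (tangRel_inf_iff hchain).1 hγ.2 with ⟨hσ, hγτ⟩ | hσγ
  · have hτα : τ ≤ α := not_not.1 fun h => hσα (Or.inl ⟨hσ, inf_lt_left.2 h⟩)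
    refine ⟨((hchain α).total (inf_le_right : γ ⊓ α ≤ α) hτα).resolve_right fun h => ?_,
      Or.inr hτα⟩
    exact inf_lt_left.1 hγτ (h.trans inf_le_left)
  · have hτγ : τ ≤ γ := hσγ.le.trans inf_le_right
    refine ⟨?_, Or.inl hτγ⟩
    rcases (hchain γ).total (inf_le_left : γ ⊓ α ≤ γ) hτγ with h | h
    · exact h
    rcases h.eq_or_lt with h | h
    · exact h.ge
    · exact absurd (lt_inf_of_lt_inf_of_lt_inf hchain hσγ h) fun h' => hσα (Or.inr h')

variable {Ψ : X → ℝ≥0∞}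

theorem dPsi_self (a : X) : dPsi (· ⊓ ·) Ψ a a = 0 := by
  simp [dPsi]

theorem dPsi_nonneg (hf : Antitone fun t => (Ψ t)⁻¹.toReal) (a b : X) :
    0 ≤ dPsi (· ⊓ ·) Ψ a b := by
  have ha := hf (inf_le_left : a ⊓ b ≤ a)
  have hb := hf (inf_le_right : a ⊓ b ≤ b)
  simp only [dPsi]
  linarith

theorem dPsi_pos (hf : StrictAnti fun t => (Ψ t)⁻¹.toReal) (hab : a ≠ b) :
    0 < dPsi (· ⊓ ·) Ψ a b := by
  have ha := hf.antitone (inf_le_left : a ⊓ b ≤ a)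
  have hb := hf.antitone (inf_le_right : a ⊓ b ≤ b)
  simp only [dPsi]
  rcases inf_lt_left_or_right hab with h | h
  · linarith [hf h]
  · linarith [hf h]

theorem dPsi_add_dPsi_of_mem_seg (h : τ ∈ seg (· ⊓ ·) γ α) :
    dPsi (· ⊓ ·) Ψ γ τ + dPsi (· ⊓ ·) Ψ τ α = dPsi (· ⊓ ·) Ψ γ α := by
  obtain ⟨hτ, hτγ | hτα⟩ := mem_seg_inf.1 h
  · have h₁ : γ ⊓ τ = τ := inf_eq_right.2 hτγ
    have h₂ : τ ⊓ α = γ ⊓ α :=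
      le_antisymm (le_inf (inf_le_left.trans hτγ) inf_le_right) (le_inf hτ inf_le_right)
    simp only [dPsi, h₁, h₂]
    ring
  · have h₁ : γ ⊓ τ = γ ⊓ α :=
      le_antisymm (le_inf inf_le_left (inf_le_right.trans hτα)) (le_inf inf_le_left hτ)
    have h₂ : τ ⊓ α = τ := inf_eq_left.2 hτα
    simp only [dPsi, h₁, h₂]
    ring

theorem dPsi_le_of_mem_seg (hf : Antitone fun t => (Ψ t)⁻¹.toReal)
    (h : τ ∈ seg (· ⊓ ·) γ α) : dPsi (· ⊓ ·) Ψ γ τ ≤ dPsi (· ⊓ ·) Ψ γ α :=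
  dPsi_add_dPsi_of_mem_seg h ▸ le_add_of_nonneg_right (dPsi_nonneg hf τ α)

theorem isOpen_tangClass (hchain : ∀ z : X, IsChain (· ≤ ·) (Set.Iic z))
    (hf : StrictAnti fun t => (Ψ t)⁻¹.toReal) (τ σ : X) :
    IsOpen[dPsiTopology (· ⊓ ·) Ψ] (tangClass (· ⊓ ·) τ σ) := by
  let _ := dPsiTopology (· ⊓ ·) Ψ
  refine isOpen_iff_forall_mem_open.2 fun γ hγ =>
    ⟨{α | dPsi (· ⊓ ·) Ψ γ α < dPsi (· ⊓ ·) Ψ γ τ}, fun α hα => ?_,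
      TopologicalSpace.isOpen_generateFrom_of_mem ⟨γ, _, dPsi_pos hf hγ.1, rfl⟩, ?_⟩
  · by_contra hα'
    exact (dPsi_le_of_mem_seg hf.antitone
      (mem_seg_of_mem_tangClass_of_notMem hchain hγ hα')).not_gt hα
  · show dPsi (· ⊓ ·) Ψ γ γ < _
    rw [dPsi_self]
    exact dPsi_pos hf hγ.1

end Tree

theorem weakTreeTopology_coarser_than_dPsiTopology_general
    -- (T2): down-sets are order-isomorphic to real intervals
    (hI : ∀ τ : T, ∃ s : Set ℝ, s.OrdConnected ∧
      Nonempty ({σ : T // σ ≤ τ} ≃o s))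
    -- (T4'): pairwise infima, realized by `wedge`
    (wedge : T → T → T) (hwedge : ∀ a b : T, IsGLB {a, b} (wedge a b))
    -- `Ψ` is an increasing parametrization with values in `[1,∞]`
    (Ψ : T → ENNReal) (hΨ1 : ∀ t, 1 ≤ Ψ t)
    (hΨstrict : ∀ a b : T, a < b → Ψ a < Ψ b)
    : (∀ τ σ : T, σ ≠ τ →
        @IsOpen T (dPsiTopology wedge Ψ) (tangClass wedge τ σ)) ∧
      dPsiTopology wedge Ψ ≤ weakTreeTopology wedge := by
  let _ := SemilatticeInf.ofIsGLB wedge hwedge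
  have hchain (z : T) : IsChain (· ≤ ·) (Set.Iic z) :=
    let ⟨_, _, ⟨e⟩⟩ := hI z
    isChain_Iic_of_orderIso e
  have hf := strictAnti_toReal_inv (fun t => (one_pos.trans_le (hΨ1 t)).ne') hΨstrict
  have hopen (τ σ : T) : IsOpen[dPsiTopology wedge Ψ] (tangClass wedge τ σ) :=
    isOpen_tangClass hchain hf τ σ
  exact ⟨fun τ σ _ => hopen τ σ, le_generateFrom fun _ ⟨τ, σ, _, hU⟩ => hU ▸ hopen τ σ⟩

/-- every tangent-vector class `[σ]_τ` is open in the metric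
topology of `d_Ψ`; consequently the weak tree topology is coarser than or equal
to the topology of `d_Ψ` (i.e. the metric topology is finer). -/
theorem weakTreeTopology_coarser_than_dPsiTopology
    -- (T1): a root
    (τ₀ : T) (hroot : ∀ t : T, τ₀ ≤ t)
    -- (T2): down-sets are order-isomorphic to real intervals
    (hI : ∀ τ : T, ∃ s : Set ℝ, s.OrdConnected ∧
      Nonempty ({σ : T // σ ≤ τ} ≃o s))
    -- (T3): totally ordered convex subsets are order-isomorphic to real intervals
    (hT3 : ∀ C : Set T, IsChain (· ≤ ·) C → C.OrdConnected →
      ∃ s : Set ℝ, s.OrdConnected ∧ Nonempty (C ≃o s))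
    -- (T4'): pairwise infima, realized by `wedge`
    (wedge : T → T → T) (hwedge : ∀ a b : T, IsGLB {a, b} (wedge a b))
    -- `Ψ` is an increasing parametrization with values in `[1,∞]`
    (Ψ : T → ENNReal) (hΨ1 : ∀ t, 1 ≤ Ψ t) (hΨmono : Monotone Ψ)
    (hΨstrict : ∀ a b : T, a < b → Ψ a < Ψ b)
    (hΨsurj : ∀ a b : T, a ≤ b → ∀ c : ENNReal, Ψ a ≤ c → c ≤ Ψ b →
      ∃ t : T, a ≤ t ∧ t ≤ b ∧ Ψ t = c)
    : (∀ τ σ : T, σ ≠ τ →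
        @IsOpen T (dPsiTopology wedge Ψ) (tangClass wedge τ σ)) ∧
      dPsiTopology wedge Ψ ≤ weakTreeTopology wedge :=
  weakTreeTopology_coarser_than_dPsiTopology_general hI wedge hwedge Ψ hΨ1 hΨstrict
end

section
/- Let (T, ≤) be a rooted non-metric tree and σ ∈ T a point with uncountably many tangent vectors (branches) at σ. Then the weak tree topology on T is not first countable at σ: there is no countable neighbourhood basis of σ. -/
variable {T : Type*} [PartialOrder T]

/-!
At `σ`, every subbasic open set `[β]_τ` containing `σ` contains every branch at `σ` except
the one pointing towards `τ`. Hence each member of a countable family of neighbourhoods of `σ`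
misses only finitely many branches at `σ`, and with uncountably many branches some `α ≠ σ` lies
in all of them. But the open set `[σ]_α` contains `σ` and not `α`.
-/

open Filter

lemma le_or_le_of_orderIso {α : Type*} [LinearOrder α] {x y z : T}
    (e : {t : T // t ≤ z} ≃o α) (hx : x ≤ z) (hy : y ≤ z) : x ≤ y ∨ y ≤ x :=
  (le_total (e ⟨x, hx⟩) (e ⟨y, hy⟩)).imp e.le_iff_le.mp e.le_iff_le.mp

section Tangent

variable {wedge : T → T → T} {σ τ a b c γ : T}

lemma wedge_le_left (hw : ∀ a b : T, IsGLB {a, b} (wedge a b)) (a b : T) : wedge a b ≤ a :=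
  (hw a b).1 (by simp)

lemma wedge_le_right (hw : ∀ a b : T, IsGLB {a, b} (wedge a b)) (a b : T) : wedge a b ≤ b :=
  (hw a b).1 (by simp)

lemma le_wedge (hw : ∀ a b : T, IsGLB {a, b} (wedge a b)) (ha : c ≤ a) (hb : c ≤ b) :
    c ≤ wedge a b :=
  (hw a b).2 (by rintro x (rfl | rfl) <;> assumption)

lemma wedge_eq_left (hw : ∀ a b : T, IsGLB {a, b} (wedge a b)) (h : a ≤ b) : wedge a b = a :=
  (wedge_le_left hw a b).antisymm (le_wedge hw le_rfl h)

lemma wedge_lt_of_not_le (hw : ∀ a b : T, IsGLB {a, b} (wedge a b)) (h : ¬σ ≤ a) :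
    wedge σ a < σ :=
  (wedge_le_left hw σ a).lt_of_ne fun he => h (he ▸ wedge_le_right hw σ a)

lemma segOC_eq_Ioc (hw : ∀ a b : T, IsGLB {a, b} (wedge a b)) (h : σ ≤ a) :
    segOC wedge σ a = Set.Ioc σ a := by
  ext γ
  simp only [segOC, seg, wedge_eq_left hw h, Set.mem_sdiff, Set.mem_ofPred_eq,
    Set.mem_singleton_iff, Set.mem_Ioc]
  constructor
  · rintro ⟨⟨h₁, h₂⟩ | ⟨h₁, h₂⟩, hne⟩
    · exact absurd (h₂.antisymm h₁) hne
    · exact ⟨h₁.lt_of_ne' hne, h₂⟩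
  · rintro ⟨h₁, h₂⟩
    exact ⟨Or.inr ⟨h₁.le, h₂⟩, h₁.ne'⟩

lemma mem_segOC_of_lt (h₁ : wedge σ a ≤ γ) (h₂ : γ < σ) : γ ∈ segOC wedge σ a :=
  ⟨Or.inl ⟨h₁, h₂.le⟩, h₂.ne⟩

lemma wedge_mem_segOC (hw : ∀ a b : T, IsGLB {a, b} (wedge a b)) (h : ¬σ ≤ a) :
    wedge σ a ∈ segOC wedge σ a :=
  mem_segOC_of_lt le_rfl (wedge_lt_of_not_le hw h)

lemma le_iff_of_mem_segOC (hw : ∀ a b : T, IsGLB {a, b} (wedge a b))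
    (hγ : γ ∈ segOC wedge σ a) : σ ≤ γ ↔ σ ≤ a := by
  by_cases h : σ ≤ a
  · rw [segOC_eq_Ioc hw h] at hγ
    exact iff_of_true hγ.1.le h
  · refine iff_of_false (fun hσγ => ?_) h
    obtain ⟨⟨-, hγσ⟩ | ⟨-, hγa⟩, hne⟩ := hγ
    · exact hne (hγσ.antisymm hσγ)
    · exact h (hσγ.trans hγa)

lemma tangRel_iff (hw : ∀ a b : T, IsGLB {a, b} (wedge a b))
    (hchain : ∀ ⦃x y z : T⦄, x ≤ z → y ≤ z → x ≤ y ∨ y ≤ x) :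
    tangRel wedge σ a b ↔ (¬σ ≤ a ∧ ¬σ ≤ b) ∨ σ < wedge a b := by
  constructor
  · rintro ⟨γ, hγa, hγb⟩
    by_cases ha : σ ≤ a
    · have hb : σ ≤ b := (le_iff_of_mem_segOC hw hγb).1 ((le_iff_of_mem_segOC hw hγa).2 ha)
      rw [segOC_eq_Ioc hw ha] at hγa
      rw [segOC_eq_Ioc hw hb] at hγb
      exact Or.inr (hγa.1.trans_le (le_wedge hw hγa.2 hγb.2))
    · exact Or.inl ⟨ha, fun hb =>
        ha ((le_iff_of_mem_segOC hw hγa).1 ((le_iff_of_mem_segOC hw hγb).2 hb))⟩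
  · rintro (⟨ha, hb⟩ | hlt)
    · rcases hchain (wedge_le_left hw σ a) (wedge_le_left hw σ b) with h | h
      · exact ⟨wedge σ b, mem_segOC_of_lt h (wedge_lt_of_not_le hw hb), wedge_mem_segOC hw hb⟩
      · exact ⟨wedge σ a, wedge_mem_segOC hw ha, mem_segOC_of_lt h (wedge_lt_of_not_le hw ha)⟩
    · have ha : σ ≤ a := hlt.le.trans (wedge_le_left hw a b)
      have hb : σ ≤ b := hlt.le.trans (wedge_le_right hw a b)
      rw [tangRel, segOC_eq_Ioc hw ha, segOC_eq_Ioc hw hb]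
      exact ⟨wedge a b, ⟨hlt, wedge_le_left hw a b⟩, ⟨hlt, wedge_le_right hw a b⟩⟩

lemma tangRel_symm (h : tangRel wedge σ a b) : tangRel wedge σ b a := by
  rwa [tangRel, Set.inter_comm]

lemma tangRel_self (hw : ∀ a b : T, IsGLB {a, b} (wedge a b)) (ha : a ≠ σ) :
    tangRel wedge σ a a := by
  rw [tangRel, Set.inter_self]
  by_cases h : σ ≤ a
  · rw [segOC_eq_Ioc hw h]
    exact ⟨a, h.lt_of_ne ha.symm, le_rfl⟩
  · exact ⟨_, wedge_mem_segOC hw h⟩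

lemma tangRel_trans (hw : ∀ a b : T, IsGLB {a, b} (wedge a b))
    (hchain : ∀ ⦃x y z : T⦄, x ≤ z → y ≤ z → x ≤ y ∨ y ≤ x)
    (hab : tangRel wedge σ a b) (hbc : tangRel wedge σ b c) : tangRel wedge σ a c := by
  rw [tangRel_iff hw hchain] at hab hbc ⊢
  rcases hab with ⟨ha, hb⟩ | hab
  · rcases hbc with ⟨-, hc⟩ | hbc
    · exact Or.inl ⟨ha, hc⟩
    · exact absurd (hbc.le.trans (wedge_le_left hw b c)) hb
  · rcases hbc with ⟨hb, -⟩ | hbc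
    · exact absurd (hab.le.trans (wedge_le_right hw a b)) hb
    · right
      rcases hchain (wedge_le_right hw a b) (wedge_le_left hw b c) with h | h
      · exact hab.trans_le
          (le_wedge hw (wedge_le_left hw a b) (h.trans (wedge_le_right hw b c)))
      · exact hbc.trans_le
          (le_wedge hw (h.trans (wedge_le_left hw a b)) (wedge_le_right hw b c))

lemma tangClass_eq_of_mem (hw : ∀ a b : T, IsGLB {a, b} (wedge a b))
    (hchain : ∀ ⦃x y z : T⦄, x ≤ z → y ≤ z → x ≤ y ∨ y ≤ x)
    (h : a ∈ tangClass wedge σ b) : tangClass wedge σ a = tangClass wedge σ b := by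
  ext x
  exact and_congr_right fun _ =>
    ⟨tangRel_trans hw hchain h.2, tangRel_trans hw hchain (tangRel_symm h.2)⟩

/-- If `γ` is not on the branch at `σ` pointing towards `τ`, then the segment `[τ, γ]` passes
through `σ`, so `σ` and `γ` lie on the same branch at `τ`. -/
lemma tangRel_of_not_tangRel (hw : ∀ a b : T, IsGLB {a, b} (wedge a b))
    (hchain : ∀ ⦃x y z : T⦄, x ≤ z → y ≤ z → x ≤ y ∨ y ≤ x)
    (hτσ : τ ≠ σ) (h : ¬tangRel wedge σ τ γ) : tangRel wedge τ σ γ := by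
  rw [tangRel_iff hw hchain] at h ⊢
  simp only [not_or, not_and, not_not] at h
  obtain ⟨hup, hnlt⟩ := h
  by_cases hστ : σ ≤ τ
  · have hlt : σ < τ := hστ.lt_of_ne hτσ.symm
    exact Or.inl ⟨hlt.not_ge, fun hτγ => hnlt (hlt.trans_le (le_wedge hw le_rfl hτγ))⟩
  · have hσγ : σ ≤ γ := hup hστ
    by_cases hτσ' : τ ≤ σ
    · exact Or.inr ((hτσ'.lt_of_ne hτσ).trans_le (le_wedge hw le_rfl hσγ))
    · refine Or.inl ⟨hτσ', fun hτγ => ?_⟩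
      rcases hchain hσγ hτγ with h | h
      · exact hστ h
      · exact hτσ' h

lemma compl_tangClass_subset (hw : ∀ a b : T, IsGLB {a, b} (wedge a b))
    (hchain : ∀ ⦃x y z : T⦄, x ≤ z → y ≤ z → x ≤ y ∨ y ≤ x)
    (hσ : σ ∈ tangClass wedge τ b) : (tangClass wedge σ τ)ᶜ ⊆ tangClass wedge τ b := by
  intro γ hγ
  obtain rfl | hγσ := eq_or_ne γ σ
  · exact hσ
  have hτσ : τ ≠ σ := hσ.1.symm
  have hno : ¬tangRel wedge σ τ γ := fun h => hγ ⟨hγσ, h⟩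
  refine ⟨?_, tangRel_trans hw hchain hσ.2 (tangRel_of_not_tangRel hw hchain hτσ hno)⟩
  rintro rfl
  exact hno (tangRel_self hw hτσ)

lemma iInf_principal_compl_tangClass_le_nhds (hw : ∀ a b : T, IsGLB {a, b} (wedge a b))
    (hchain : ∀ ⦃x y z : T⦄, x ≤ z → y ≤ z → x ≤ y ∨ y ≤ x) (σ : T) :
    ⨅ x, 𝓟 (tangClass wedge σ x)ᶜ ≤ @nhds T (weakTreeTopology wedge) σ := by
  unfold weakTreeTopology
  rw [TopologicalSpace.nhds_generateFrom]
  refine le_iInf₂ ?_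
  rintro _ ⟨hσ, τ, b, -, rfl⟩
  exact iInf_le_of_le τ (principal_mono.2 (compl_tangClass_subset hw hchain hσ))

lemma exists_forall_notMem_tangClass (hw : ∀ a b : T, IsGLB {a, b} (wedge a b))
    (hchain : ∀ ⦃x y z : T⦄, x ≤ z → y ≤ z → x ≤ y ∨ y ≤ x)
    (huncount : ¬ Set.Countable {C : Set T | ∃ α : T, α ≠ σ ∧ C = tangClass wedge σ α})
    {X : Set T} (hX : X.Countable) : ∃ α, α ≠ σ ∧ ∀ x ∈ X, α ∉ tangClass wedge σ x := by
  by_contra! h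
  refine huncount ((hX.image (tangClass wedge σ)).mono ?_)
  rintro _ ⟨α, hα, rfl⟩
  obtain ⟨x, hx, hαx⟩ := h α hα
  exact ⟨x, hx, (tangClass_eq_of_mem hw hchain hαx).symm⟩

end Tangent

theorem weakTreeTopology_not_firstCountable_at_general
    -- (T2): down-sets are order-isomorphic to real intervals
    (hI : ∀ τ : T, ∃ s : Set ℝ, s.OrdConnected ∧
      Nonempty ({σ : T // σ ≤ τ} ≃o s))
    -- (T4'): pairwise infima, realized by `wedge`
    (wedge : T → T → T) (hwedge : ∀ a b : T, IsGLB {a, b} (wedge a b))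
    (σ : T)
    (huncount : ¬ Set.Countable {C : Set T | ∃ α : T, α ≠ σ ∧ C = tangClass wedge σ α}) :
    ¬ ∃ f : ℕ → Set T,
        (∀ n : ℕ, @IsOpen T (weakTreeTopology wedge) (f n) ∧ σ ∈ f n) ∧
        (∀ U : Set T, @IsOpen T (weakTreeTopology wedge) U → σ ∈ U →
          ∃ n : ℕ, f n ⊆ U) := by
  have hchain : ∀ ⦃x y z : T⦄, x ≤ z → y ≤ z → x ≤ y ∨ y ≤ x := fun x y z hx hy =>
    have ⟨_, _, ⟨e⟩⟩ := hI z
    le_or_le_of_orderIso e hx hy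
  rintro ⟨f, hf, hbasis⟩
  have hcofinite : ∀ n, ∃ F : Set T, F.Finite ∧ ⋂ x ∈ F, (tangClass wedge σ x)ᶜ ⊆ f n := by
    intro n
    have hnhds := @IsOpen.mem_nhds _ (weakTreeTopology wedge) _ _ (hf n).1 (hf n).2
    exact (hasBasis_iInf_principal_finite _).mem_iff.1
      (iInf_principal_compl_tangClass_le_nhds hwedge hchain σ hnhds)
  choose F hFfin hF using hcofinite
  obtain ⟨α, hασ, hα⟩ := exists_forall_notMem_tangClass hwedge hchain huncount
    (Set.countable_iUnion fun n => (hFfin n).countable)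
  have hαf : ∀ n, α ∈ f n := fun n =>
    hF n (Set.mem_iInter₂.2 fun x hx => hα x (Set.mem_iUnion.2 ⟨n, hx⟩))
  obtain ⟨n, hn⟩ := hbasis (tangClass wedge α σ)
    (TopologicalSpace.isOpen_generateFrom_of_mem ⟨α, σ, hασ.symm, rfl⟩)
    ⟨hασ.symm, tangRel_self hwedge hασ.symm⟩
  exact (hn (hαf n)).1 rfl

/-- if `σ` has uncountably many tangent vectors (branches), then
the weak tree topology has no countable neighbourhood basis at `σ`. -/
theorem weakTreeTopology_not_firstCountable_at
    -- (T1): a root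
    (τ₀ : T) (hroot : ∀ t : T, τ₀ ≤ t)
    -- (T2): down-sets are order-isomorphic to real intervals
    (hI : ∀ τ : T, ∃ s : Set ℝ, s.OrdConnected ∧
      Nonempty ({σ : T // σ ≤ τ} ≃o s))
    -- (T3): totally ordered convex subsets are order-isomorphic to real intervals
    (hT3 : ∀ C : Set T, IsChain (· ≤ ·) C → C.OrdConnected →
      ∃ s : Set ℝ, s.OrdConnected ∧ Nonempty (C ≃o s))
    -- (T4'): pairwise infima, realized by `wedge`
    (wedge : T → T → T) (hwedge : ∀ a b : T, IsGLB {a, b} (wedge a b))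
    (σ : T)
    (huncount : ¬ Set.Countable {C : Set T | ∃ α : T, α ≠ σ ∧ C = tangClass wedge σ α}) :
    ¬ ∃ f : ℕ → Set T,
        (∀ n : ℕ, @IsOpen T (weakTreeTopology wedge) (f n) ∧ σ ∈ f n) ∧
        (∀ U : Set T, @IsOpen T (weakTreeTopology wedge) U → σ ∈ U →
          ∃ n : ℕ, f n ⊆ U) :=
  weakTreeTopology_not_firstCountable_at_general hI wedge hwedge σ huncount
end
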